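/- For every φ, ψ ∈ L¹(Ω,C(X)) with inf_{x∈X} ψ_ω(x) > 0 for ℙ-a.e. ω, and for every T > 0 and ε > 0, the map ω ↦ Q_{ψ,T}(f,ω,φ,ε) is measurable with respect to the σ-algebra ℱ. -/

import Mathlib

open MeasureTheory Filter Set ProbabilityTheory
open scoped ENNReal NNReal

namespace RDSPaper

section Defs

variable {Ω X : Type*} [MeasurableSpace Ω] [MeasurableSpace X] [MetricSpace X]

/-- The iterates `f_ω^n = f_{θ^{n-1}ω} ∘ ⋯ ∘ f_{θω} ∘ f_ω` of the random dynamical system. -/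
def fIter (f : Ω → X → X) (θ : Ω → Ω) (ω : Ω) : ℕ → X → X
  | 0 => id
  | n + 1 => fun x => f (θ^[n] ω) (fIter f θ ω n x)

/-- Birkhoff sums `S_n g_ω(x) = Σ_{i<n} g_{θ^i ω}(f_ω^i x)`. -/
def birk (f : Ω → X → X) (θ : Ω → Ω) (g : Ω → X → ℝ) (ω : Ω) (n : ℕ) (x : X) : ℝ :=
  ∑ i ∈ Finset.range n, g (θ^[i] ω) (fIter f θ ω i x)

/-- Bowen metric `d_n^ω(x,y) = max_{0 ≤ i ≤ n-1} d(f_ω^i x, f_ω^i y)`. -/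
noncomputable def dB (f : Ω → X → X) (θ : Ω → Ω) (ω : Ω) (n : ℕ) (x y : X) : ℝ :=
  (((Finset.range n).sup fun i => nndist (fIter f θ ω i x) (fIter f θ ω i y) : ℝ≥0) : ℝ)

/-- `E` is an `(ω,n,ε)`-separated subset of `Y`. -/
def IsSep (f : Ω → X → X) (θ : Ω → Ω) (ω : Ω) (n : ℕ) (ε : ℝ) (Y : Set X) (E : Finset X) :
    Prop :=
  ↑E ⊆ Y ∧ ∀ x ∈ E, ∀ y ∈ E, x ≠ y → ε < dB f θ ω n x y

/-- `F` is an `(ω,n,ε)`-spanning subset of `Y`. -/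
def IsSpan (f : Ω → X → X) (θ : Ω → Ω) (ω : Ω) (n : ℕ) (ε : ℝ) (Y : Set X) (F : Finset X) :
    Prop :=
  ↑F ⊆ Y ∧ ∀ y ∈ Y, ∃ x ∈ F, dB f θ ω n x y ≤ ε

/-- Membership in `L¹(Ω, C(X))`. -/
def MemL1 (μP : Measure Ω) (g : Ω → X → ℝ) : Prop :=
  Measurable (Function.uncurry g) ∧ (∀ ω, Continuous (g ω)) ∧
    Integrable (fun ω => ⨆ x : X, |g ω x|) μP

/-- The `L¹` norm `‖g‖₁ = ∫_Ω sup_x |g_ω(x)| dℙ(ω)`. -/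
noncomputable def L1norm (μP : Measure Ω) (g : Ω → X → ℝ) : ℝ :=
  ∫ ω, ⨆ x : X, |g ω x| ∂μP

/-- `P_ω(f,φ,n,ε)`: supremum of `Σ_{x ∈ E} exp(S_n φ_ω(x))` over `(ω,n,ε)`-separated sets. -/
noncomputable def sepSum (f : Ω → X → X) (θ : Ω → Ω) (φ : Ω → X → ℝ) (ω : Ω) (n : ℕ)
    (ε : ℝ) : ℝ :=
  sSup {s : ℝ | ∃ E : Finset X, IsSep f θ ω n ε univ E ∧
    s = ∑ x ∈ E, Real.exp (birk f θ φ ω n x)}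

/-- The fiber topological pressure `P_Ω(f,φ)` (via separated sets; the limit as `ε → 0` is a
supremum over `ε > 0` by monotonicity). -/
noncomputable def fiberPres (μP : Measure Ω) (θ : Ω → Ω) (f : Ω → X → X) (φ : Ω → X → ℝ) :
    EReal :=
  ⨆ (ε : ℝ) (_ : 0 < ε),
    Filter.limsup
      (fun n : ℕ => (((n : ℝ)⁻¹ * ∫ ω, Real.log (sepSum f θ φ ω n ε) ∂μP : ℝ) : EReal)) atTop

/-- Induced-time partition element `X_{ω,n} = {x : S_n ψ_ω(x) ≤ T < S_{n+1} ψ_ω(x)}`. -/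
def Xind (f : Ω → X → X) (θ : Ω → Ω) (ψ : Ω → X → ℝ) (ω : Ω) (T : ℝ) (n : ℕ) : Set X :=
  {x | birk f θ ψ ω n x ≤ T ∧ T < birk f θ ψ ω (n + 1) x}

/-- `Q_{ψ,T}(f,ω,φ,ε)`: infimum of `Σ_{n ∈ S_{ω,T}} Σ_{x ∈ F_n} exp(S_n φ_ω(x))` over families
of `(ω,n,ε)`-spanning sets of `X_{ω,n}` (the sum over `n ∈ S_{ω,T}` is the sum over all `n`,
since `F_n ⊆ X_{ω,n} = ∅` for `n ∉ S_{ω,T}`). -/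
noncomputable def Qind (f : Ω → X → X) (θ : Ω → Ω) (φ ψ : Ω → X → ℝ) (ω : Ω) (T ε : ℝ) : ℝ :=
  sInf {s : ℝ | ∃ C : ℕ → Finset X, (∀ n, IsSpan f θ ω n ε (Xind f θ ψ ω T n) (C n)) ∧
    s = ∑' n : ℕ, ∑ x ∈ C n, Real.exp (birk f θ φ ω n x)}

/-- `P_{ψ,T}(f,ω,φ,ε)`: supremum of `Σ_{n ∈ S_{ω,T}} Σ_{x ∈ E_n} exp(S_n φ_ω(x))` over families
of `(ω,n,ε)`-separated sets of `X_{ω,n}`. -/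
noncomputable def PindSep (f : Ω → X → X) (θ : Ω → Ω) (φ ψ : Ω → X → ℝ) (ω : Ω)
    (T ε : ℝ) : ℝ :=
  sSup {s : ℝ | ∃ E : ℕ → Finset X, (∀ n, IsSep f θ ω n ε (Xind f θ ψ ω T n) (E n)) ∧
    s = ∑' n : ℕ, ∑ x ∈ E n, Real.exp (birk f θ φ ω n x)}

/-- The `ψ`-induced fiber topological pressure `P_{ψ,Ω}(f,φ)`, defined via spanning sets. -/
noncomputable def indPres (μP : Measure Ω) (θ : Ω → Ω) (f : Ω → X → X) (φ ψ : Ω → X → ℝ) :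
    EReal :=
  ⨆ (ε : ℝ) (_ : 0 < ε),
    Filter.limsup
      (fun T : ℝ => ((T⁻¹ * ∫ ω, Real.log (Qind f θ φ ψ ω T ε) ∂μP : ℝ) : EReal)) atTop

/-- `Y_{ω,n} = {x : S_n ψ_ω(x) > T}`. -/
def Yind (f : Ω → X → X) (θ : Ω → Ω) (ψ : Ω → X → ℝ) (ω : Ω) (T : ℝ) (n : ℕ) : Set X :=
  {x | T < birk f θ ψ ω n x}

/-- `n`-th term of the partition function `R_{ψ,T}`: supremum of `Σ_{x ∈ E} exp(S_n g_ω(x))`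
over `(ω,n,ε)`-separated sets of `Y_{ω,n}`. -/
noncomputable def Rn (f : Ω → X → X) (θ : Ω → Ω) (g ψ : Ω → X → ℝ) (ω : Ω) (T ε : ℝ)
    (n : ℕ) : ℝ :=
  sSup {s : ℝ | ∃ E : Finset X, IsSep f θ ω n ε (Yind f θ ψ ω T n) E ∧
    s = ∑ x ∈ E, Real.exp (birk f θ g ω n x)}

/-- The partition function `R_{ψ,T}(f,ω,g,ε)`, as an extended nonnegative real since the sum
over `n ∈ G_{ω,T}` may diverge. -/
noncomputable def Rtotal (f : Ω → X → X) (θ : Ω → Ω) (g ψ : Ω → X → ℝ) (ω : Ω)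
    (T ε : ℝ) : ℝ≥0∞ :=
  ∑' n : ℕ, ENNReal.ofReal (Rn f θ g ψ ω T ε n)

/-- The extended-real valued integral `∫_Ω log R_{ψ,T}(f,ω,g,ε) dℙ(ω)`; it is `⊤` when the
partition function is infinite on a non-null set. -/
noncomputable def RlogInt (μP : Measure Ω) (f : Ω → X → X) (θ : Ω → Ω) (g ψ : Ω → X → ℝ)
    (T ε : ℝ) : EReal :=
  haveI := Classical.propDecidable (∀ᵐ ω ∂μP, Rtotal f θ g ψ ω T ε ≠ ⊤)
  if ∀ᵐ ω ∂μP, Rtotal f θ g ψ ω T ε ≠ ⊤ then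
    ((∫ ω, Real.log (Rtotal f θ g ψ ω T ε).toReal ∂μP : ℝ) : EReal)
  else ⊤

/-- Nonlinear weighted spanning-set sum `inf Σ_{x ∈ C} exp(n F(S_n φ_ω(x)/n))`. -/
noncomputable def spanSumF (f : Ω → X → X) (θ : Ω → Ω) (F : ℝ → ℝ) (φ : Ω → X → ℝ) (ω : Ω)
    (n : ℕ) (ε : ℝ) : ℝ :=
  sInf {s : ℝ | ∃ C : Finset X, IsSpan f θ ω n ε univ C ∧
    s = ∑ x ∈ C, Real.exp ((n : ℝ) * F (birk f θ φ ω n x / n))}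

/-- Nonlinear weighted separated-set sum `sup Σ_{x ∈ E} exp(n F(S_n φ_ω(x)/n))`. -/
noncomputable def sepSumF (f : Ω → X → X) (θ : Ω → Ω) (F : ℝ → ℝ) (φ : Ω → X → ℝ) (ω : Ω)
    (n : ℕ) (ε : ℝ) : ℝ :=
  sSup {s : ℝ | ∃ E : Finset X, IsSep f θ ω n ε univ E ∧
    s = ∑ x ∈ E, Real.exp ((n : ℝ) * F (birk f θ φ ω n x / n))}

/-- The nonlinear fiber topological pressure `P_Ω^F(f,φ)`, defined via spanning sets. -/
noncomputable def nlFiberPres (μP : Measure Ω) (θ : Ω → Ω) (f : Ω → X → X) (F : ℝ → ℝ)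
    (φ : Ω → X → ℝ) : EReal :=
  ⨆ (ε : ℝ) (_ : 0 < ε),
    Filter.limsup
      (fun n : ℕ => (((n : ℝ)⁻¹ * ∫ ω, Real.log (spanSumF f θ F φ ω n ε) ∂μP : ℝ) : EReal))
      atTop

/-- Higher-dimensional nonlinear separated-set sum with a linear deformation:
`sup Σ_{x ∈ E} exp(n F(S_n Φ_ω(x)/n) − β S_n ψ_ω(x))`. -/
noncomputable def sepSumFd (f : Ω → X → X) (θ : Ω → Ω) {d : ℕ} (F : (Fin d → ℝ) → ℝ)
    (Φ : Fin d → Ω → X → ℝ) (β : ℝ) (ψ : Ω → X → ℝ) (ω : Ω) (n : ℕ) (ε : ℝ) : ℝ :=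
  sSup {s : ℝ | ∃ E : Finset X, IsSep f θ ω n ε univ E ∧
    s = ∑ x ∈ E, Real.exp ((n : ℝ) * F (fun i => birk f θ (Φ i) ω n x / n)
      - β * birk f θ ψ ω n x)}

/-- The higher-dimensional nonlinear fiber pressure `P_Ω^F(f, Φ − βψ)`. -/
noncomputable def nlFiberPresd (μP : Measure Ω) (θ : Ω → Ω) (f : Ω → X → X) {d : ℕ}
    (F : (Fin d → ℝ) → ℝ) (Φ : Fin d → Ω → X → ℝ) (β : ℝ) (ψ : Ω → X → ℝ) : EReal :=
  ⨆ (ε : ℝ) (_ : 0 < ε),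
    Filter.limsup
      (fun n : ℕ =>
        (((n : ℝ)⁻¹ * ∫ ω, Real.log (sepSumFd f θ F Φ β ψ ω n ε) ∂μP : ℝ) : EReal)) atTop

/-- Higher-dimensional nonlinear induced spanning sum
`inf Σ_{n ∈ S_{ω,T}} Σ_{x ∈ C_n} exp(n F(S_n Φ_ω(x)/n))`. -/
noncomputable def QindFd (f : Ω → X → X) (θ : Ω → Ω) {d : ℕ} (F : (Fin d → ℝ) → ℝ)
    (Φ : Fin d → Ω → X → ℝ) (ψ : Ω → X → ℝ) (ω : Ω) (T ε : ℝ) : ℝ :=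
  sInf {s : ℝ | ∃ C : ℕ → Finset X, (∀ n, IsSpan f θ ω n ε (Xind f θ ψ ω T n) (C n)) ∧
    s = ∑' n : ℕ, ∑ x ∈ C n, Real.exp ((n : ℝ) * F (fun i => birk f θ (Φ i) ω n x / n))}

/-- The higher-dimensional nonlinear `ψ`-induced fiber pressure `P_{ψ,Ω}^F(f,Φ)`. -/
noncomputable def nlIndPres (μP : Measure Ω) (θ : Ω → Ω) (f : Ω → X → X) {d : ℕ}
    (F : (Fin d → ℝ) → ℝ) (Φ : Fin d → Ω → X → ℝ) (ψ : Ω → X → ℝ) : EReal :=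
  ⨆ (ε : ℝ) (_ : 0 < ε),
    Filter.limsup
      (fun T : ℝ => ((T⁻¹ * ∫ ω, Real.log (QindFd f θ F Φ ψ ω T ε) ∂μP : ℝ) : EReal)) atTop

/-- The skew product `Θ(ω,x) = (θω, f_ω x)`. -/
def skew (θ : Ω → Ω) (f : Ω → X → X) : Ω × X → Ω × X := fun p => (θ p.1, f p.1 p.2)

/-- `μ ∈ M_ℙ(f)`: a `Θ`-invariant Borel probability measure on `J = Ω × X` with marginal `ℙ`. -/
structure IsInvariant (μP : Measure Ω) (θ : Ω → Ω) (f : Ω → X → X)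
    (μ : Measure (Ω × X)) : Prop where
  prob : IsProbabilityMeasure μ
  marginal : μ.map Prod.fst = μP
  invariant : μ.map (skew θ f) = μ

/-- The `ω`-section of a subset of `J = Ω × X`. -/
def sect (A : Set (Ω × X)) (ω : Ω) : Set X := {x | (ω, x) ∈ A}

/-- A finite measurable partition of `J = Ω × X`. -/
def IsFinPartition (ξ : Finset (Set (Ω × X))) : Prop :=
  (∀ A ∈ ξ, MeasurableSet A) ∧ ⋃₀ (↑ξ : Set (Set (Ω × X))) = univ ∧
    ∀ A ∈ ξ, ∀ B ∈ ξ, A ≠ B → A ∩ B = ∅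

/-- Entropy `H_{μ_ω}(⋁_{i<n} (f_ω^i)⁻¹ ξ_{θ^i ω})` of the refined partition. -/
noncomputable def Hpart (f : Ω → X → X) (θ : Ω → Ω) (ν : Measure X) (ω : Ω) (n : ℕ)
    (ξ : Finset (Set (Ω × X))) : ℝ :=
  ∑ c : Fin n → {A // A ∈ ξ}, Real.negMulLog
    ((ν (⋂ i : Fin n, fIter f θ ω i ⁻¹' sect ((c i : Set (Ω × X))) (θ^[(i : ℕ)] ω))).toReal)

/-- The disintegration `ω ↦ μ_ω` of a (finite) measure on `Ω × X` over its first marginal. -/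
noncomputable def condK [StandardBorelSpace X] [Nonempty X] (μ : Measure (Ω × X)) :
    Kernel Ω X :=
  haveI := Classical.propDecidable (IsFiniteMeasure μ)
  if h : IsFiniteMeasure μ then haveI := h; μ.condKernel else 0

/-- The fiber measure-theoretic entropy `h^ran_μ(f)`. -/
noncomputable def fiberEntropy [StandardBorelSpace X] [Nonempty X] (μP : Measure Ω)
    (θ : Ω → Ω) (f : Ω → X → X) (μ : Measure (Ω × X)) : EReal :=
  ⨆ (ξ : Finset (Set (Ω × X))) (_ : IsFinPartition ξ),
    Filter.limsup
      (fun n : ℕ => (((n : ℝ)⁻¹ * ∫ ω, Hpart f θ (condK μ ω) ω n ξ ∂μP : ℝ) : EReal)) atTop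

/-- Integral `∫_J g dμ` of a function `g : Ω → X → ℝ` over `J = Ω × X`. -/
noncomputable def intJ (μ : Measure (Ω × X)) (g : Ω → X → ℝ) : ℝ :=
  ∫ p : Ω × X, g p.1 p.2 ∂μ

/-- The weak* topology on measures on `J`, generated by the maps `μ ↦ ∫_J g dμ` for
`g ∈ L¹(Ω, C(X))`. -/
noncomputable def weakTopo (μP : Measure Ω) : TopologicalSpace (Measure (Ω × X)) :=
  ⨅ (g : Ω → X → ℝ) (_ : MemL1 μP g),
    TopologicalSpace.induced (fun μ : Measure (Ω × X) => intJ μ g) inferInstance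

/-- `μ` is an equilibrium state for the pair of potentials `(φ, ψ)`. -/
def IsEquilibrium [StandardBorelSpace X] [Nonempty X] (μP : Measure Ω) (θ : Ω → Ω)
    (f : Ω → X → X) (φ ψ : Ω → X → ℝ) (μ : Measure (Ω × X)) : Prop :=
  IsInvariant μP θ f μ ∧
    indPres μP θ f φ ψ =
      (((intJ μ ψ)⁻¹ : ℝ) : EReal) * fiberEntropy μP θ f μ
        + ((intJ μ φ / intJ μ ψ : ℝ) : EReal)

/-- The pair `(f,φ)` has an abundance of ergodic measures. -/
def Abundance [StandardBorelSpace X] [Nonempty X] (μP : Measure Ω) (θ : Ω → Ω)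
    (f : Ω → X → X) (φ : Ω → X → ℝ) : Prop :=
  ∀ μ : Measure (Ω × X), IsInvariant μP θ f μ →
    ∀ h : ℝ, (h : EReal) < fiberEntropy μP θ f μ → ∀ ε : ℝ, 0 < ε →
      ∃ ν : Measure (Ω × X), IsInvariant μP θ f ν ∧ Ergodic (skew θ f) ν ∧
        (h : EReal) < fiberEntropy μP θ f ν ∧ |intJ ν φ - intJ μ φ| < ε

/-- The pair `(f,Φ)` has an abundance of ergodic measures (higher-dimensional version). -/
def AbundanceVec [StandardBorelSpace X] [Nonempty X] (μP : Measure Ω) (θ : Ω → Ω)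
    (f : Ω → X → X) {d : ℕ} (Φ : Fin d → Ω → X → ℝ) : Prop :=
  ∀ μ : Measure (Ω × X), IsInvariant μP θ f μ →
    ∀ h : ℝ, (h : EReal) < fiberEntropy μP θ f μ → ∀ ε : ℝ, 0 < ε →
      ∃ ν : Measure (Ω × X), IsInvariant μP θ f ν ∧ Ergodic (skew θ f) ν ∧
        (h : EReal) < fiberEntropy μP θ f ν ∧ ∀ i, |intJ ν (Φ i) - intJ μ (Φ i)| < ε

/-- The entropy map `μ ↦ h^ran_μ(f)` is affine. -/
def EntropyAffine [StandardBorelSpace X] [Nonempty X] (μP : Measure Ω) (θ : Ω → Ω)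
    (f : Ω → X → X) : Prop :=
  ∀ μ ν : Measure (Ω × X), IsInvariant μP θ f μ → IsInvariant μP θ f ν →
    ∀ t : ℝ, 0 ≤ t → t ≤ 1 →
      fiberEntropy μP θ f (ENNReal.ofReal t • μ + ENNReal.ofReal (1 - t) • ν) =
        (t : EReal) * fiberEntropy μP θ f μ + ((1 - t : ℝ) : EReal) * fiberEntropy μP θ f ν

/-- The entropy map `μ ↦ h^ran_μ(f)` is upper semi-continuous on `M_ℙ(f)` with respect to the
weak* topology. -/
def EntropyUSC [StandardBorelSpace X] [Nonempty X] (μP : Measure Ω) (θ : Ω → Ω)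
    (f : Ω → X → X) : Prop :=
  @UpperSemicontinuousOn (Measure (Ω × X)) EReal (weakTopo μP) _
    (fun μ => fiberEntropy μP θ f μ) {μ | IsInvariant μP θ f μ}

end Defs

/-!
Each term `spanCost` of `Q_{ψ,T}` is measurable in `ω`: it is `< c` iff some tuple
`v ∈ X^{m+1}` lies in `X_{ω,n}`, `ε`-spans it and has weight `< c`. Spanning is the closed
condition `coverRadius ≤ ε`, and `coverRadius` is `1`-Lipschitz in `v` and measurable in `ω`. So
all conditions have the form `G ω v ≤ 0 ∧ H ω v < 0` with `G`, `H` continuous in `v` and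
measurable in `ω`, and over a compact separable parameter space such sets of `ω` are measurable
(infima reduce to a countable dense set).

Since `inf ψ_ω > 0` a.e. and `θ` preserves `ℙ`, Poincaré recurrence gives `S_n ψ_ω → ∞`
uniformly in `x` for a.e. `ω`. So a.e. only finitely many `X_{ω,n}` are nonempty and `Q_{ψ,T}`
is the sum of its terms; completeness of `ℙ` upgrades this a.e. identity to measurability.
-/

section Caratheodory

variable {Ω Z Z' : Type*} [MeasurableSpace Ω] [TopologicalSpace Z] [TopologicalSpace Z']

structure IsCaratheodory (G : Ω → Z → ℝ) : Prop where
  continuous : ∀ ω, Continuous (G ω)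
  measurable : ∀ z, Measurable fun ω => G ω z

namespace IsCaratheodory

variable {G H D : Ω → Z → ℝ}

theorem comp_left {h : ℝ → ℝ} (hh : Continuous h) (hG : IsCaratheodory G) :
    IsCaratheodory fun ω z => h (G ω z) :=
  ⟨fun ω => hh.comp (hG.continuous ω), fun z => hh.measurable.comp (hG.measurable z)⟩

theorem comp_right {g : Z' → Z} (hg : Continuous g) (hG : IsCaratheodory G) :
    IsCaratheodory fun ω z' => G ω (g z') :=
  ⟨fun ω => (hG.continuous ω).comp hg, fun z' => hG.measurable (g z')⟩

protected theorem max (hG : IsCaratheodory G) (hH : IsCaratheodory H) :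
    IsCaratheodory fun ω z => max (G ω z) (H ω z) :=
  ⟨fun ω => (hG.continuous ω).max (hH.continuous ω),
    fun z => (hG.measurable z).max (hH.measurable z)⟩

protected theorem min (hG : IsCaratheodory G) (hH : IsCaratheodory H) :
    IsCaratheodory fun ω z => min (G ω z) (H ω z) :=
  ⟨fun ω => (hG.continuous ω).min (hH.continuous ω),
    fun z => (hG.measurable z).min (hH.measurable z)⟩

theorem finset_sum {ι : Type*} (s : Finset ι) {G : ι → Ω → Z → ℝ}
    (hG : ∀ i ∈ s, IsCaratheodory (G i)) : IsCaratheodory fun ω z => ∑ i ∈ s, G i ω z :=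
  ⟨fun ω => continuous_finsetSum s fun i hi => (hG i hi).continuous ω,
    fun z => Finset.measurable_sum s fun i hi => (hG i hi).measurable z⟩

theorem finset_sup' {ι : Type*} {s : Finset ι} (hs : s.Nonempty) {G : ι → Ω → Z → ℝ}
    (hG : ∀ i ∈ s, IsCaratheodory (G i)) :
    IsCaratheodory fun ω z => s.sup' hs fun i => G i ω z := by
  convert Finset.sup'_induction hs G (p := IsCaratheodory) (fun _ h₁ _ h₂ => h₁.max h₂) hG
    using 1
  ext ω z
  simp only [Finset.sup'_apply]

theorem finset_inf' {ι : Type*} {s : Finset ι} (hs : s.Nonempty) {G : ι → Ω → Z → ℝ}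
    (hG : ∀ i ∈ s, IsCaratheodory (G i)) :
    IsCaratheodory fun ω z => s.inf' hs fun i => G i ω z := by
  convert Finset.inf'_induction hs G (p := IsCaratheodory) (fun _ h₁ _ h₂ => h₁.min h₂) hG
    using 1
  ext ω z
  simp only [Finset.inf'_apply]

theorem measurable_uncurry [TopologicalSpace.MetrizableSpace Z] [SecondCountableTopology Z]
    [MeasurableSpace Z] [OpensMeasurableSpace Z] (hG : IsCaratheodory G) :
    Measurable (Function.uncurry G) :=
  (measurable_uncurry_of_continuous_of_measurable hG.continuous hG.measurable).comp measurable_swap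

theorem measurable_iInf [TopologicalSpace.SeparableSpace Z] (hG : IsCaratheodory G) :
    Measurable fun ω => ⨅ z, G ω z := by
  obtain ⟨S, hS_count, hS_dense⟩ := TopologicalSpace.exists_countable_dense Z
  have := hS_count.to_subtype
  have h : (fun ω => ⨅ z, G ω z) = fun ω => ⨅ s : S, G ω s :=
    funext fun ω => (hS_dense.ciInf' (hG.continuous ω)).symm
  rw [h]
  exact Measurable.iInf fun s => hG.measurable s

variable [TopologicalSpace.SeparableSpace Z] [CompactSpace Z]

theorem measurableSet_exists_nonpos (hG : IsCaratheodory G) :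
    MeasurableSet {ω | ∃ z, G ω z ≤ 0} := by
  rcases isEmpty_or_nonempty Z with hZ | hZ
  · simp
  have h : {ω | ∃ z, G ω z ≤ 0} = (fun ω => ⨅ z, G ω z) ⁻¹' Iic 0 := by
    ext ω
    have hcpt := isCompact_range (hG.continuous ω)
    obtain ⟨z₀, hz₀⟩ : ⨅ z, G ω z ∈ range (G ω) := hcpt.sInf_mem (range_nonempty _)
    exact ⟨fun ⟨z, hz⟩ => (ciInf_le hcpt.bddBelow z).trans hz, fun h => ⟨z₀, hz₀ ▸ h⟩⟩
  rw [h]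
  exact hG.measurable_iInf measurableSet_Iic

/-- The strict condition is exhausted by the closed conditions `H ≤ -1/(k+1)`. -/
theorem measurableSet_exists_nonpos_and_neg (hG : IsCaratheodory G) (hH : IsCaratheodory H) :
    MeasurableSet {ω | ∃ z, G ω z ≤ 0 ∧ H ω z < 0} := by
  have h : {ω | ∃ z, G ω z ≤ 0 ∧ H ω z < 0} =
      ⋃ k : ℕ, {ω | ∃ z, max (G ω z) (H ω z + 1 / (k + 1)) ≤ 0} := by
    ext ω
    simp only [mem_ofPred_eq, mem_iUnion, max_le_iff]
    constructor
    · rintro ⟨z, hGz, hHz⟩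
      obtain ⟨k, hk⟩ := exists_nat_one_div_lt (neg_pos.2 hHz)
      exact ⟨k, z, hGz, by linarith⟩
    · rintro ⟨k, z, hGz, hHz⟩
      exact ⟨z, hGz, by linarith [Nat.one_div_pos_of_nat (α := ℝ) (n := k)]⟩
  rw [h]
  exact .iUnion fun k =>
    measurableSet_exists_nonpos (hG.max (hH.comp_left (continuous_add_const _)))

theorem measurable_sSup_image (hD : IsCaratheodory D) (hG : IsCaratheodory G)
    (hH : IsCaratheodory H) :
    Measurable fun ω => sSup (D ω '' {z | G ω z ≤ 0 ∧ H ω z < 0}) := by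
  refine measurable_of_Ioi fun t => ?_
  have h : (fun ω => sSup (D ω '' {z | G ω z ≤ 0 ∧ H ω z < 0})) ⁻¹' Ioi t =
      {ω | ∃ z, G ω z ≤ 0 ∧ max (H ω z) (t - D ω z) < 0} ∪
        ({ω | ∃ z, G ω z ≤ 0 ∧ H ω z < 0}ᶜ ∩ {_ω | t < 0}) := by
    ext ω
    simp only [mem_preimage, mem_Ioi, mem_union, mem_inter_iff, mem_compl_iff, mem_ofPred_eq,
      max_lt_iff, sub_neg]
    rcases eq_empty_or_nonempty {z | G ω z ≤ 0 ∧ H ω z < 0} with hK | ⟨z₀, hz₀⟩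
    · have hK' : ∀ z, ¬(G ω z ≤ 0 ∧ H ω z < 0) := fun z hz => hK.subset hz
      rw [hK, image_empty, Real.sSup_empty]
      grind
    · rw [lt_csSup_iff ((isCompact_range (hD.continuous ω)).bddAbove.mono
        (image_subset_range _ _)) ⟨_, mem_image_of_mem _ hz₀⟩]
      simp only [mem_image, mem_ofPred_eq] at hz₀ ⊢
      grind
  rw [h]
  exact (measurableSet_exists_nonpos_and_neg hG
    (hH.max (hD.comp_left (continuous_sub_left t)))).union
      ((measurableSet_exists_nonpos_and_neg hG hH).compl.inter (.const _))

end IsCaratheodory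

end Caratheodory

section CoverRadius

variable {Y : Type*} [PseudoMetricSpace Y] {m : ℕ}

noncomputable def coverRadius (K : Set Y) (w : Fin (m + 1) → Y) : ℝ :=
  sSup ((fun y => Finset.univ.inf' Finset.univ_nonempty fun i => dist (w i) y) '' K)

variable {K : Set Y}

theorem bddAbove_nearestDist_image (hK : Bornology.IsBounded K) (w : Fin (m + 1) → Y) :
    BddAbove ((fun y => Finset.univ.inf' Finset.univ_nonempty fun i => dist (w i) y) '' K) := by
  obtain ⟨r, hr⟩ := hK.subset_closedBall (w 0)
  refine ⟨r, ?_⟩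
  rintro _ ⟨y, hy, rfl⟩
  exact (Finset.inf'_le _ (Finset.mem_univ 0)).trans (by simpa [dist_comm] using hr hy)

theorem coverRadius_nonneg (K : Set Y) (w : Fin (m + 1) → Y) : 0 ≤ coverRadius K w :=
  Real.sSup_nonneg <| by
    rintro _ ⟨y, -, rfl⟩
    exact Finset.le_inf' _ _ fun i _ => dist_nonneg

theorem coverRadius_le_iff (hK : Bornology.IsBounded K) {ε : ℝ} (hε : 0 ≤ ε)
    (w : Fin (m + 1) → Y) : coverRadius K w ≤ ε ↔ ∀ y ∈ K, ∃ i, dist (w i) y ≤ ε := by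
  constructor
  · intro h y hy
    obtain ⟨i, -, hi⟩ := (Finset.inf'_le_iff _).1
      ((le_csSup (bddAbove_nearestDist_image hK w) (mem_image_of_mem _ hy)).trans h)
    exact ⟨i, hi⟩
  · intro h
    refine Real.sSup_le ?_ hε
    rintro _ ⟨y, hy, rfl⟩
    obtain ⟨i, hi⟩ := h y hy
    exact (Finset.inf'_le_iff _).2 ⟨i, Finset.mem_univ i, hi⟩

theorem lipschitzWith_coverRadius (hK : Bornology.IsBounded K) :
    LipschitzWith 1 (coverRadius K : (Fin (m + 1) → Y) → ℝ) := by
  refine LipschitzWith.of_le_add fun w w' => ?_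
  refine Real.sSup_le ?_ (add_nonneg (coverRadius_nonneg K w') dist_nonneg)
  rintro _ ⟨y, hy, rfl⟩
  obtain ⟨j, -, hj⟩ := Finset.exists_mem_eq_inf' Finset.univ_nonempty fun i => dist (w' i) y
  calc Finset.univ.inf' Finset.univ_nonempty (fun i => dist (w i) y)
      ≤ dist (w j) y := Finset.inf'_le _ (Finset.mem_univ j)
    _ ≤ dist (w' j) y + dist (w j) (w' j) := by linarith [dist_triangle (w j) (w' j) y]
    _ ≤ coverRadius K w' + dist w w' := by
        rw [← hj]
        exact add_le_add (le_csSup (bddAbove_nearestDist_image hK w') (mem_image_of_mem _ hy))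
          (dist_le_pi_dist w w' j)

end CoverRadius

theorem Xind_eq_setOf {Ω X : Type*} {f : Ω → X → X} {θ : Ω → Ω} {ψ : Ω → X → ℝ} (ω : Ω) (T : ℝ)
    (n : ℕ) :
    Xind f θ ψ ω T n = {x | birk f θ ψ ω n x - T ≤ 0 ∧ T - birk f θ ψ ω (n + 1) x < 0} := by
  ext x
  simp [Xind, sub_neg]

section RandomDynamics

variable {Ω X : Type*} [MetricSpace X] {f : Ω → X → X} {θ : Ω → Ω}

theorem continuous_fIter (hfc : ∀ ω, Continuous (f ω)) (ω : Ω) (i : ℕ) :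
    Continuous (fIter f θ ω i) := by
  induction i with
  | zero => exact continuous_id
  | succ i ih => exact (hfc _).comp ih

def orbitSegment (f : Ω → X → X) (θ : Ω → Ω) (ω : Ω) (n : ℕ) (x : X) : Fin n → X :=
  fun i => fIter f θ ω i x

theorem dB_eq_dist (ω : Ω) (n : ℕ) (x y : X) :
    dB f θ ω n x y = dist (orbitSegment f θ ω n x) (orbitSegment f θ ω n y) := by
  simp only [dB, orbitSegment, dist_pi_def]
  rw [Finset.sup_fin_univ fun i => nndist (fIter f θ ω i x) (fIter f θ ω i y)]

theorem continuous_orbitSegment (hfc : ∀ ω, Continuous (f ω)) (ω : Ω) (n : ℕ) :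
    Continuous (orbitSegment f θ ω n) :=
  continuous_pi fun i => continuous_fIter hfc ω i

variable [MeasurableSpace Ω] [MeasurableSpace X]

structure IsContinuousBundleRDS (θ : Ω → Ω) (f : Ω → X → X) : Prop where
  measurable_base : Measurable θ
  measurable_uncurry : Measurable (Function.uncurry f)
  continuous : ∀ ω, Continuous (f ω)

theorem isCaratheodory_of_memL1 {μP : Measure Ω} {g : Ω → X → ℝ} (hg : MemL1 μP g) :
    IsCaratheodory g :=
  ⟨hg.2.1, fun _ => hg.1.of_uncurry_right⟩

theorem IsContinuousBundleRDS.measurable_fIter (hf : IsContinuousBundleRDS θ f) (i : ℕ) (x : X) :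
    Measurable fun ω => fIter f θ ω i x := by
  induction i with
  | zero => exact measurable_const
  | succ i ih => exact hf.measurable_uncurry.comp ((hf.measurable_base.iterate i).prodMk ih)

theorem IsContinuousBundleRDS.measurable_orbitSegment (hf : IsContinuousBundleRDS θ f) (n : ℕ)
    (x : X) : Measurable fun ω => orbitSegment f θ ω n x :=
  measurable_pi_lambda _ fun i => hf.measurable_fIter i x

variable [SecondCountableTopology X] [BorelSpace X]

theorem IsContinuousBundleRDS.isCaratheodory_birk (hf : IsContinuousBundleRDS θ f)
    {g : Ω → X → ℝ} (hg : IsCaratheodory g) (n : ℕ) : IsCaratheodory fun ω => birk f θ g ω n :=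
  ⟨fun ω => continuous_finsetSum _ fun i _ =>
      (hg.continuous _).comp (continuous_fIter hf.continuous ω i),
    fun x => Finset.measurable_sum _ fun i _ => hg.measurable_uncurry.comp
      ((hf.measurable_base.iterate i).prodMk (hf.measurable_fIter i x))⟩

end RandomDynamics

theorem _root_.Finset.exists_fin_succ_embedding_map_univ_eq {α : Type*} {s : Finset α}
    (hs : s.Nonempty) : ∃ (m : ℕ) (v : Fin (m + 1) ↪ α), Finset.univ.map v = s := by
  obtain ⟨m, hm⟩ := Nat.exists_eq_add_one.2 hs.card_pos
  refine ⟨m, (finCongr hm.symm).toEmbedding.trans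
    (s.equivFin.symm.toEmbedding.trans (Function.Embedding.subtype _)), ?_⟩
  ext x
  simp only [Finset.mem_map, Finset.mem_univ, true_and]
  exact ⟨fun ⟨a, ha⟩ => ha ▸ Finset.coe_mem _,
    fun hx => ⟨Fin.cast hm (s.equivFin ⟨x, hx⟩), by simp⟩⟩

section Spanning

variable {Ω X : Type*} [MetricSpace X] {f : Ω → X → X} {θ : Ω → Ω} {ω : Ω} {n : ℕ} {ε : ℝ}
  {Y : Set X}

theorem isSpan_empty_iff : IsSpan f θ ω n ε Y ∅ ↔ Y = ∅ := by
  simp [IsSpan, eq_empty_iff_forall_notMem]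

theorem IsSpan.eq_empty {C : Finset X} (hC : IsSpan f θ ω n ε ∅ C) : C = ∅ :=
  Finset.coe_eq_empty.1 (subset_empty_iff.1 hC.1)

theorem exists_isSpan_sum_lt_iff [DecidableEq X] {w : X → ℝ} (hw : ∀ x, 0 ≤ w x) {c : ℝ} :
    (∃ C : Finset X, IsSpan f θ ω n ε Y C ∧ ∑ x ∈ C, w x < c) ↔
      (Y = ∅ ∧ 0 < c) ∨ ∃ (m : ℕ) (v : Fin (m + 1) → X),
        IsSpan f θ ω n ε Y (Finset.univ.image v) ∧ ∑ i, w (v i) < c := by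
  constructor
  · rintro ⟨C, hC, hc⟩
    rcases C.eq_empty_or_nonempty with rfl | hne
    · exact Or.inl ⟨isSpan_empty_iff.1 hC, by simpa using hc⟩
    · obtain ⟨m, v, rfl⟩ := Finset.exists_fin_succ_embedding_map_univ_eq hne
      refine Or.inr ⟨m, v, ?_, by simpa using hc⟩
      rwa [← Finset.map_eq_image]
  · rintro (⟨rfl, hc⟩ | ⟨m, v, hv, hc⟩)
    · exact ⟨∅, isSpan_empty_iff.2 rfl, by simpa using hc⟩
    · exact ⟨_, hv, (Finset.sum_image_le_of_nonneg fun x _ => hw x).trans_lt hc⟩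

variable [CompactSpace X]

theorem exists_isSpan (hfc : ∀ ω, Continuous (f ω)) (hε : 0 < ε) (Y : Set X) :
    ∃ C : Finset X, IsSpan f θ ω n ε Y C := by
  have hY : TotallyBounded (orbitSegment f θ ω n '' Y) :=
    (isCompact_univ.image (continuous_orbitSegment hfc ω n)).totallyBounded.subset
      (image_mono (subset_univ Y))
  obtain ⟨s, hsY, hsfin, hcover⟩ := Set.exists_subset_image_finite_and.1
    (Metric.finite_approx_of_totallyBounded hY ε hε)
  refine ⟨hsfin.toFinset, by simpa using hsY, fun y hy => ?_⟩
  obtain ⟨_, ⟨x, hx, rfl⟩, hxy⟩ := mem_iUnion₂.1 (hcover (mem_image_of_mem _ hy))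
  refine ⟨x, hsfin.mem_toFinset.2 hx, ?_⟩
  rw [dB_eq_dist, dist_comm]
  exact (Metric.mem_ball.1 hxy).le

theorem isSpan_image_iff_coverRadius_le [DecidableEq X] (hε : 0 ≤ ε) {m : ℕ}
    (v : Fin (m + 1) → X) :
    IsSpan f θ ω n ε Y (Finset.univ.image v) ↔
      (∀ i, v i ∈ Y) ∧
        coverRadius (orbitSegment f θ ω n '' Y) (orbitSegment f θ ω n ∘ v) ≤ ε := by
  rw [coverRadius_le_iff Metric.isBounded_of_compactSpace hε]
  simp [IsSpan, dB_eq_dist, range_subset_iff]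

end Spanning

section SpanCost

variable {Ω X : Type*} [MetricSpace X] {f : Ω → X → X} {θ : Ω → Ω} {φ ψ : Ω → X → ℝ}
  {ω : Ω} {n : ℕ} {ε T : ℝ} {Y : Set X}

/-- The `n`-th term of `Q_{ψ,T}`, when `Y = X_{ω,n}`. -/
noncomputable def spanCost (f : Ω → X → X) (θ : Ω → Ω) (φ : Ω → X → ℝ) (ω : Ω) (n : ℕ) (ε : ℝ)
    (Y : Set X) : ℝ :=
  sInf {s : ℝ | ∃ C : Finset X, IsSpan f θ ω n ε Y C ∧ s = ∑ x ∈ C, Real.exp (birk f θ φ ω n x)}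

theorem spanCost_le {C : Finset X} (hC : IsSpan f θ ω n ε Y C) :
    spanCost f θ φ ω n ε Y ≤ ∑ x ∈ C, Real.exp (birk f θ φ ω n x) :=
  csInf_le ⟨0, by rintro _ ⟨C, -, rfl⟩; positivity⟩ ⟨C, hC, rfl⟩

theorem spanCost_empty : spanCost f θ φ ω n ε ∅ = 0 := by
  have h : {s : ℝ | ∃ C : Finset X, IsSpan f θ ω n ε ∅ C ∧
      s = ∑ x ∈ C, Real.exp (birk f θ φ ω n x)} = {0} := by
    ext s
    constructor
    · rintro ⟨C, hC, rfl⟩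
      simp [hC.eq_empty]
    · rintro rfl
      exact ⟨∅, isSpan_empty_iff.2 rfl, by simp⟩
  rw [spanCost, h, csInf_singleton]

variable [CompactSpace X]

theorem spanCost_lt_iff (hfc : ∀ ω, Continuous (f ω)) (hε : 0 < ε) {c : ℝ} :
    spanCost f θ φ ω n ε Y < c ↔
      ∃ C : Finset X, IsSpan f θ ω n ε Y C ∧ ∑ x ∈ C, Real.exp (birk f θ φ ω n x) < c := by
  constructor
  · intro h
    obtain ⟨C₀, hC₀⟩ := exists_isSpan (θ := θ) (ω := ω) (n := n) hfc hε Y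
    obtain ⟨_, ⟨C, hC, rfl⟩, hlt⟩ := exists_lt_of_csInf_lt (by exact ⟨_, C₀, hC₀, rfl⟩) h
    exact ⟨C, hC, hlt⟩
  · rintro ⟨C, hC, hlt⟩
    exact (spanCost_le hC).trans_lt hlt

/-- The families in `Q_{ψ,T}` are independent choices for each `n`, and only finitely many of
them are nonempty. -/
theorem Qind_eq_tsum_spanCost (hfc : ∀ ω, Continuous (f ω)) (hε : 0 < ε)
    (hXind : ∀ᶠ n in atTop, Xind f θ ψ ω T n = ∅) :
    Qind f θ φ ψ ω T ε = ∑' n, spanCost f θ φ ω n ε (Xind f θ ψ ω T n) := by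
  obtain ⟨N, hN⟩ := eventually_atTop.1 hXind
  have h_out : ∀ n ∉ Finset.range N, Xind f θ ψ ω T n = ∅ := fun n hn =>
    hN n (by simpa using hn)
  have h_family : ∀ C : ℕ → Finset X, (∀ n, IsSpan f θ ω n ε (Xind f θ ψ ω T n) (C n)) →
      ∑' n, ∑ x ∈ C n, Real.exp (birk f θ φ ω n x) =
        ∑ n ∈ Finset.range N, ∑ x ∈ C n, Real.exp (birk f θ φ ω n x) := fun C hC =>
    tsum_eq_sum fun n hn => by
      have hCn := hC n
      rw [h_out n hn] at hCn
      rw [hCn.eq_empty, Finset.sum_empty]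
  rw [tsum_eq_sum fun n hn => by rw [h_out n hn, spanCost_empty]]
  refine le_antisymm (le_of_forall_pos_le_add fun δ hδ => ?_) (le_csInf ?_ ?_)
  · have hδ' : 0 < δ / (N + 1) := by positivity
    choose C hC hCδ using fun n => (spanCost_lt_iff (φ := φ) hfc hε).1
      (lt_add_of_pos_right (spanCost f θ φ ω n ε (Xind f θ ψ ω T n)) hδ')
    calc Qind f θ φ ψ ω T ε
        ≤ ∑ n ∈ Finset.range N, ∑ x ∈ C n, Real.exp (birk f θ φ ω n x) :=
          csInf_le ⟨0, by rintro _ ⟨C, -, rfl⟩; positivity⟩ ⟨C, hC, (h_family C hC).symm⟩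
      _ ≤ ∑ n ∈ Finset.range N, (spanCost f θ φ ω n ε (Xind f θ ψ ω T n) + δ / (N + 1)) :=
          Finset.sum_le_sum fun n _ => (hCδ n).le
      _ ≤ ∑ n ∈ Finset.range N, spanCost f θ φ ω n ε (Xind f θ ψ ω T n) + δ := by
          rw [Finset.sum_add_distrib, Finset.sum_const, Finset.card_range, nsmul_eq_mul]
          gcongr
          rw [mul_div_assoc', div_le_iff₀ (by positivity)]
          nlinarith
  · choose C hC using fun n =>
      exists_isSpan (θ := θ) (ω := ω) (n := n) hfc hε (Xind f θ ψ ω T n)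
    exact ⟨_, C, hC, rfl⟩
  · rintro _ ⟨C, hC, rfl⟩
    rw [h_family C hC]
    exact Finset.sum_le_sum fun n _ => spanCost_le (hC n)

end SpanCost

section Measurability

variable {Ω X : Type*} [MeasurableSpace Ω] [MetricSpace X] [CompactSpace X] [MeasurableSpace X]
  [BorelSpace X] {f : Ω → X → X} {θ : Ω → Ω} {φ ψ : Ω → X → ℝ} {ε : ℝ}

namespace IsContinuousBundleRDS

theorem isCaratheodory_coverRadius_Xind (hf : IsContinuousBundleRDS θ f)
    (hψ : IsCaratheodory ψ) (T : ℝ) (n m : ℕ) :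
    IsCaratheodory fun ω (v : Fin (m + 1) → X) =>
      coverRadius (orbitSegment f θ ω n '' Xind f θ ψ ω T n) (orbitSegment f θ ω n ∘ v) := by
  refine ⟨fun ω => (lipschitzWith_coverRadius Metric.isBounded_of_compactSpace).continuous.comp
    (continuous_pi fun i => (continuous_orbitSegment hf.continuous ω n).comp
      (continuous_apply i)), fun v => ?_⟩
  have hdist : IsCaratheodory fun ω y => Finset.univ.inf' Finset.univ_nonempty fun i =>
      dist (orbitSegment f θ ω n (v i)) (orbitSegment f θ ω n y) :=
    IsCaratheodory.finset_inf' _ fun i _ =>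
      ⟨fun ω => continuous_const.dist (continuous_orbitSegment hf.continuous ω n),
        fun y => (hf.measurable_orbitSegment n (v i)).dist (hf.measurable_orbitSegment n y)⟩
  simp only [coverRadius, image_image, Function.comp_apply, Xind_eq_setOf]
  exact hdist.measurable_sSup_image
    ((hf.isCaratheodory_birk hψ n).comp_left (continuous_sub_right T))
    ((hf.isCaratheodory_birk hψ (n + 1)).comp_left (continuous_sub_left T))

theorem measurableSet_exists_isSpan_tuple [DecidableEq X] (hf : IsContinuousBundleRDS θ f)
    (hφ : IsCaratheodory φ) (hψ : IsCaratheodory ψ) (hε : 0 ≤ ε) (T c : ℝ) (n m : ℕ) :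
    MeasurableSet {ω | ∃ v : Fin (m + 1) → X,
      IsSpan f θ ω n ε (Xind f θ ψ ω T n) (Finset.univ.image v) ∧
        ∑ i, Real.exp (birk f θ φ ω n (v i)) < c} := by
  have hne : (Finset.univ : Finset (Fin (m + 1))).Nonempty := Finset.univ_nonempty
  have h_closed := (IsCaratheodory.finset_sup' hne fun i _ =>
    ((hf.isCaratheodory_birk hψ n).comp_right (continuous_apply i)).comp_left
      (continuous_sub_right T)).max
    ((hf.isCaratheodory_coverRadius_Xind hψ T n m).comp_left (continuous_sub_right ε))
  have h_open := (IsCaratheodory.finset_sup' hne fun i _ =>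
    ((hf.isCaratheodory_birk hψ (n + 1)).comp_right (continuous_apply i)).comp_left
      (continuous_sub_left T)).max
    ((IsCaratheodory.finset_sum Finset.univ fun i _ =>
      ((hf.isCaratheodory_birk hφ n).comp_right (continuous_apply i)).comp_left
        Real.continuous_exp).comp_left (continuous_sub_right c))
  convert IsCaratheodory.measurableSet_exists_nonpos_and_neg h_closed h_open using 1
  ext ω
  simp only [isSpan_image_iff_coverRadius_le hε, Xind, mem_ofPred_eq, max_le_iff, max_lt_iff,
    Finset.sup'_le_iff, Finset.sup'_lt_iff, Finset.mem_univ, true_implies, sub_nonpos, sub_neg,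
    forall_and]
  tauto

theorem measurable_spanCost_Xind (hf : IsContinuousBundleRDS θ f) (hφ : IsCaratheodory φ)
    (hψ : IsCaratheodory ψ) (hε : 0 < ε) (T : ℝ) (n : ℕ) :
    Measurable fun ω => spanCost f θ φ ω n ε (Xind f θ ψ ω T n) := by
  classical
  refine measurable_of_Iio fun c => ?_
  have h_empty : MeasurableSet {ω | Xind f θ ψ ω T n = ∅} := by
    convert (IsCaratheodory.measurableSet_exists_nonpos_and_neg
      ((hf.isCaratheodory_birk hψ n).comp_left (continuous_sub_right T))
      ((hf.isCaratheodory_birk hψ (n + 1)).comp_left (continuous_sub_left T))).compl using 1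
    ext ω
    simp [Xind_eq_setOf, eq_empty_iff_forall_notMem]
  have h : (fun ω => spanCost f θ φ ω n ε (Xind f θ ψ ω T n)) ⁻¹' Iio c =
      ({ω | Xind f θ ψ ω T n = ∅} ∩ {_ω | 0 < c}) ∪ ⋃ m : ℕ, {ω | ∃ v : Fin (m + 1) → X,
        IsSpan f θ ω n ε (Xind f θ ψ ω T n) (Finset.univ.image v) ∧
          ∑ i, Real.exp (birk f θ φ ω n (v i)) < c} := by
    ext ω
    simp only [mem_preimage, mem_Iio, spanCost_lt_iff hf.continuous hε,
      exists_isSpan_sum_lt_iff fun x => (Real.exp_pos _).le, mem_union, mem_inter_iff,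
      mem_iUnion, mem_ofPred_eq]
  rw [h]
  exact (h_empty.inter (.const _)).union
    (.iUnion fun m => measurableSet_exists_isSpan_tuple hf hφ hψ hε.le T c n m)

end IsContinuousBundleRDS

end Measurability

/-- Poincaré recurrence: a.e. orbit returns infinitely often to `{F > 1/(k+1)}`, where
`1/(k+1) < F ω`, so the positive terms `F (θ^[i] ω)` do not tend to `0`. -/
theorem _root_.MeasureTheory.MeasurePreserving.ae_tendsto_birkhoffSum_atTop {Ω : Type*}
    [MeasurableSpace Ω] {μ : Measure Ω} [IsFiniteMeasure μ] {θ : Ω → Ω}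
    (hθ : MeasurePreserving θ μ μ) {F : Ω → ℝ} (hF : Measurable F) (hpos : ∀ᵐ ω ∂μ, 0 < F ω) :
    ∀ᵐ ω ∂μ, Tendsto (fun n => birkhoffSum θ F n ω) atTop atTop := by
  have h_orbit : ∀ᵐ ω ∂μ, ∀ i, 0 < F (θ^[i] ω) :=
    ae_all_iff.2 fun i => (hθ.iterate i).quasiMeasurePreserving.ae hpos
  have h_rec : ∀ᵐ ω ∂μ, ∀ k : ℕ, 1 / ((k : ℝ) + 1) < F ω →
      ∃ᶠ i in atTop, 1 / ((k : ℝ) + 1) < F (θ^[i] ω) :=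
    ae_all_iff.2 fun k => hθ.conservative.ae_mem_imp_frequently_image_mem
      (measurableSet_lt measurable_const hF).nullMeasurableSet
  filter_upwards [hpos, h_orbit, h_rec] with ω h0 hi hrec
  obtain ⟨k, hk⟩ := exists_nat_one_div_lt h0
  refine (not_summable_iff_tendsto_nat_atTop_of_nonneg fun i => (hi i).le).1 fun hsum => ?_
  obtain ⟨i, hlt, hgt⟩ := ((hrec k hk).and_eventually (hsum.tendsto_atTop_zero.eventually
    (gt_mem_nhds Nat.one_div_pos_of_nat))).exists
  exact hlt.not_gt hgt

section Induced

variable {Ω X : Type*} [MetricSpace X] [CompactSpace X] {f : Ω → X → X} {θ : Ω → Ω}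
  {ψ : Ω → X → ℝ}

theorem birkhoffSum_iInf_le_birk (hψc : ∀ ω, Continuous (ψ ω)) (ω : Ω) (n : ℕ) (x : X) :
    birkhoffSum θ (fun ω => ⨅ x, ψ ω x) n ω ≤ birk f θ ψ ω n x :=
  Finset.sum_le_sum fun i _ =>
    ciInf_le (isCompact_range (hψc _)).bddBelow (fIter f θ ω i x)

theorem ae_eventually_Xind_eq_empty [MeasurableSpace Ω] {μ : Measure Ω} [IsFiniteMeasure μ]
    (hθ : MeasurePreserving θ μ μ) (hψ : IsCaratheodory ψ) (hψpos : ∀ᵐ ω ∂μ, 0 < ⨅ x, ψ ω x)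
    (T : ℝ) :
    ∀ᵐ ω ∂μ, ∀ᶠ n in atTop, Xind f θ ψ ω T n = ∅ := by
  filter_upwards [hθ.ae_tendsto_birkhoffSum_atTop hψ.measurable_iInf hψpos] with ω hω
  filter_upwards [hω.eventually_gt_atTop T] with n hn
  exact eq_empty_iff_forall_notMem.2 fun x hx =>
    (hn.trans_le (birkhoffSum_iInf_le_birk hψ.continuous ω n x)).not_ge hx.1

end Induced

theorem statement_2_general
    {Ω X : Type*} [MeasurableSpace Ω]
    [MetricSpace X] [CompactSpace X] [MeasurableSpace X] [BorelSpace X]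
    (μP : Measure Ω) [IsProbabilityMeasure μP] [μP.IsComplete]
    (θ : Ω → Ω) (hθm : Measurable θ) (hθerg : Ergodic θ μP)
    (f : Ω → X → X) (hfm : Measurable (Function.uncurry f)) (hfc : ∀ ω, Continuous (f ω))
    (φ ψ : Ω → X → ℝ) (hφ : MemL1 μP φ) (hψ : MemL1 μP ψ)
    (hψpos : ∀ᵐ ω ∂μP, 0 < ⨅ x : X, ψ ω x)
    :
    ∀ T : ℝ, 0 < T → ∀ ε : ℝ, 0 < ε → Measurable fun ω => Qind f θ φ ψ ω T ε := by
  intro T _ ε hε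
  have hf : IsContinuousBundleRDS θ f := ⟨hθm, hfm, hfc⟩
  have hφ' := isCaratheodory_of_memL1 hφ
  have hψ' := isCaratheodory_of_memL1 hψ
  have h_terms : Measurable fun ω => ∑' n, spanCost f θ φ ω n ε (Xind f θ ψ ω T n) :=
    Measurable.tsum fun n => hf.measurable_spanCost_Xind hφ' hψ' hε T n
  refine (aemeasurable_iff_measurable (μ := μP)).1 ⟨_, h_terms, ?_⟩
  filter_upwards [ae_eventually_Xind_eq_empty hθerg.toMeasurePreserving hψ' hψpos T] with ω hω
  exact Qind_eq_tsum_spanCost hfc hε hω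

theorem statement_2
    {Ω X : Type*} [MeasurableSpace Ω] [StandardBorelSpace Ω]
    [MetricSpace X] [CompactSpace X] [SecondCountableTopology X] [Nonempty X]
    [MeasurableSpace X] [BorelSpace X] [StandardBorelSpace X]
    (μP : Measure Ω) [IsProbabilityMeasure μP] [μP.IsComplete]
    (θ : Ω → Ω) (hθm : Measurable θ) (hθbij : Function.Bijective θ) (hθerg : Ergodic θ μP)
    (f : Ω → X → X) (hfm : Measurable (Function.uncurry f)) (hfc : ∀ ω, Continuous (f ω))
    (φ ψ : Ω → X → ℝ) (hφ : MemL1 μP φ) (hψ : MemL1 μP ψ)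
    (hψpos : ∀ᵐ ω ∂μP, 0 < ⨅ x : X, ψ ω x)
    :
    ∀ T : ℝ, 0 < T → ∀ ε : ℝ, 0 < ε → Measurable fun ω => Qind f θ φ ψ ω T ε :=
  statement_2_general μP θ hθm hθerg f hfm hfc φ ψ hφ hψ hψpos

end RDSPaper
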